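/- Let D be a tournament missing disjoint paths of length 2 and let C = a_1b_1c_1, …, a_kb_kc_k be a double cycle in Δ(D). For every t ∈ {1,…,k} (indices modulo k, so index k+1 means 1), with all neighborhoods taken in the induced subdigraph D[K(C)]: (1) N⁺⁺(a_t) = (N⁻(a_t) ∪ {b_t}) ∖ {a_{t+1}, b_{t+1}, c_{t+1}, c_t}; (2) N⁺⁺(c_t) = (N⁻(c_t) ∪ {b_t}) ∖ {a_{t+1}, b_{t+1}, c_{t+1}, a_t}; (3) N⁺⁺(b_t) = (N⁻(b_t) ∪ {a_t, c_t}) ∖ {a_{t+1}, b_{t+1}, c_{t+1}}. -/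

import Mathlib

namespace SSNC

variable {V : Type*}

/-- The arc relation of an oriented graph: no digons (hence irreflexive). -/
def Oriented (A : V → V → Prop) : Prop := ∀ u v, A u v → ¬ A v u

/-- `u ∈ N⁺⁺(v)`: the second out-neighborhood. -/
def SecondOut (A : V → V → Prop) (v u : V) : Prop :=
  u ≠ v ∧ ¬ A v u ∧ ∃ w, A v w ∧ A w u

/-- `{u, v}` is a missing edge of the digraph. -/
def IsMissing (A : V → V → Prop) (u v : V) : Prop :=
  u ≠ v ∧ ¬ A u v ∧ ¬ A v u

/-- The losing relation for a fixed labeling of the two pairs: `a→x`, `b→y`,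
`y ∉ N⁺(a) ∪ N⁺⁺(a)` and `x ∉ N⁺(b) ∪ N⁺⁺(b)`. -/
def LosesOrd (A : V → V → Prop) (a b x y : V) : Prop :=
  A a x ∧ A b y ∧ ¬ A a y ∧ ¬ SecondOut A a y ∧ ¬ A b x ∧ ¬ SecondOut A b x

/-- The missing edge `{a,b}` loses to the missing edge `{x,y}` (for some labeling). -/
def Loses (A : V → V → Prop) (a b x y : V) : Prop :=
  LosesOrd A a b x y ∨ LosesOrd A a b y x

/-- Degree of a vertex in the missing graph. -/
noncomputable def mdeg (A : V → V → Prop) (v : V) : ℕ :=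
  ({w | IsMissing A v w} : Set V).ncard

/-- The missing graph, as a simple graph. -/
def missingGraph (A : V → V → Prop) : SimpleGraph V where
  Adj u v := IsMissing A u v
  symm := by
    constructor
    rintro u v ⟨h1, h2, h3⟩
    exact ⟨h1.symm, h3, h2⟩
  loopless := by
    constructor
    rintro v ⟨h1, -, -⟩
    exact h1 rfl

/-- The missing graph is a vertex-disjoint union of paths
(equivalently: acyclic with maximum degree at most 2). -/
def MissingDisjointPaths (A : V → V → Prop) : Prop :=
  (missingGraph A).IsAcyclic ∧ ∀ v, mdeg A v ≤ 2

/-- The missing graph is a vertex-disjoint union of paths on exactly 3 vertices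
(equivalently: every missing edge has one endpoint of missing-degree 1 and one of
missing-degree 2). -/
def MissingPaths2 (A : V → V → Prop) : Prop :=
  ∀ u v, IsMissing A u v →
    (mdeg A u = 1 ∧ mdeg A v = 2) ∨ (mdeg A u = 2 ∧ mdeg A v = 1)

/-- The missing graph is a vertex-disjoint union of paths on 2 or 3 vertices. -/
def MissingPathsLe2 (A : V → V → Prop) : Prop :=
  ∀ u v, IsMissing A u v →
    (mdeg A u = 1 ∧ mdeg A v = 1) ∨ (mdeg A u = 1 ∧ mdeg A v = 2) ∨
    (mdeg A u = 2 ∧ mdeg A v = 1)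

/-- Out-degree of the missing edge `{u,v}` in the dependency digraph `Δ(D)`:
the number of missing edges it loses to. -/
noncomputable def outDegDelta (A : V → V → Prop) (u v : V) : ℕ :=
  ({f : Sym2 V | ∃ x y, f = s(x, y) ∧ IsMissing A x y ∧ Loses A u v x y}).ncard

/-- In-degree of the missing edge `{u,v}` in the dependency digraph `Δ(D)`:
the number of missing edges losing to it. -/
noncomputable def inDegDelta (A : V → V → Prop) (u v : V) : ℕ :=
  ({f : Sym2 V | ∃ x y, f = s(x, y) ∧ IsMissing A x y ∧ Loses A x y u v}).ncard

/-- `C = a₁b₁c₁, …, a_k b_k c_k` is a double cycle in `Δ(D)`: pairwise vertex-disjoint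
missing paths of length 2 (`k ≥ 2`), where each of `{aᵢ,bᵢ}, {bᵢ,cᵢ}` loses to each of
`{aᵢ₊₁,bᵢ₊₁}, {bᵢ₊₁,cᵢ₊₁}` (indices modulo `k`). -/
def IsDoubleCycle (A : V → V → Prop) (k : ℕ) (a b c : ZMod k → V) : Prop :=
  2 ≤ k ∧
  (∀ i, IsMissing A (a i) (b i) ∧ IsMissing A (b i) (c i) ∧ a i ≠ c i) ∧
  (∀ i j, i ≠ j → Disjoint ({a i, b i, c i} : Set V) {a j, b j, c j}) ∧
  (∀ i, Loses A (a i) (b i) (a (i + 1)) (b (i + 1)) ∧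
        Loses A (a i) (b i) (b (i + 1)) (c (i + 1)) ∧
        Loses A (b i) (c i) (a (i + 1)) (b (i + 1)) ∧
        Loses A (b i) (c i) (b (i + 1)) (c (i + 1)))

/-- `K(C)` for a double cycle `C`. -/
def Kset {k : ℕ} (a b c : ZMod k → V) : Set V :=
  {v | ∃ i, v = a i ∨ v = b i ∨ v = c i}

/-- Out-neighborhood in the subdigraph induced on `K`. -/
def outIn (A : V → V → Prop) (K : Set V) (v : V) : Set V := {u | u ∈ K ∧ A v u}

/-- In-neighborhood in the subdigraph induced on `K`. -/
def inIn (A : V → V → Prop) (K : Set V) (v : V) : Set V := {u | u ∈ K ∧ A u v}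

/-- Second out-neighborhood in the subdigraph induced on `K`. -/
def secondOutIn (A : V → V → Prop) (K : Set V) (v : V) : Set V :=
  {u | u ∈ K ∧ u ≠ v ∧ ¬ A v u ∧ ∃ w ∈ K, A v w ∧ A w u}

/-- Second in-neighborhood in the subdigraph induced on `K`. -/
def secondInIn (A : V → V → Prop) (K : Set V) (v : V) : Set V :=
  {u | u ∈ K ∧ u ≠ v ∧ ¬ A u v ∧ ∃ w ∈ K, A u w ∧ A w v}

/-!
Between consecutive paths `aₜbₜcₜ` and `aₜ₊₁bₜ₊₁cₜ₊₁` of a double cycle the losing relations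
allow only two patterns: each vertex `x` of path `t` is beaten by, and cannot reach in two steps,
the vertices of path `t + 1` of its own kind (ends `aᵢ, cᵢ` versus centre `bᵢ`), or those of the
other kind. Every in-neighbour of such a vertex must then beat `x` as well, so the patterns
propagate around the cycle: between paths `i ≠ j`, all arcs joining vertices of the same kind point
one way and all arcs joining vertices of different kinds the other way, as dictated by the parity
of the patterns met on the way from `i` to `j`; once around the cycle this parity is odd.
Thus `D[K(C)]` is the circular tournament on `2k` points with the antipodal pairs missing, each
end-point doubled into a pair `aᵢ, cᵢ`, and its second out-neighbourhoods can be read off.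
-/

theorem IsMissing.symm {A : V → V → Prop} {u v : V} (h : IsMissing A u v) : IsMissing A v u :=
  ⟨h.1.symm, h.2.2, h.2.1⟩

theorem adj_of_not_secondOut {A : V → V → Prop} {x x' y : V} (hne : x' ≠ x) (hxx' : ¬ A x x')
    (hso : ¬ SecondOut A x x') (hyx' : A y x') (hxy : A x y ∨ A y x) : A y x :=
  hxy.resolve_left fun hxy => hso ⟨hne, hxx', y, hxy, hyx'⟩

theorem Oriented.irrefl {A : V → V → Prop} (hA : Oriented A) {v : V} : ¬ A v v :=
  fun h => hA v v h h

theorem Oriented.ne_of_adj {A : V → V → Prop} (hA : Oriented A) {u v : V} (h : A u v) :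
    u ≠ v :=
  fun huv => hA.irrefl (huv ▸ h)

namespace MissingPaths2

variable {A : V → V → Prop} {x y z w : V}

theorem mdeg_eq_two (hP : MissingPaths2 A) (hxy : IsMissing A x y) (hyz : IsMissing A y z)
    (hxz : x ≠ z) : mdeg A y = 2 := by
  refine (hP x y hxy).elim (·.2) fun h => ?_
  obtain ⟨v, hv⟩ := Set.ncard_eq_one.mp h.2
  have hx : x ∈ {u | IsMissing A y u} := hxy.symm
  have hz : z ∈ {u | IsMissing A y u} := hyz
  rw [hv, Set.mem_singleton_iff] at hx hz
  exact absurd (hx.trans hz.symm) hxz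

theorem eq_of_isMissing (hP : MissingPaths2 A) (hxy : IsMissing A x y) (hyz : IsMissing A y z)
    (hxz : x ≠ z) (hxw : IsMissing A x w) : w = y := by
  have hx : mdeg A x = 1 := by
    have := hP.mdeg_eq_two hxy hyz hxz
    rcases hP x y hxy with h | h <;> omega
  obtain ⟨v, hv⟩ := Set.ncard_eq_one.mp hx
  have hy : y ∈ {u | IsMissing A x u} := hxy
  have hw : w ∈ {u | IsMissing A x u} := hxw
  rw [hv, Set.mem_singleton_iff] at hy hw
  exact hw.trans hy.symm

theorem not_isMissing_of_mdeg_eq_two (hP : MissingPaths2 A) (hx : mdeg A x = 2)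
    (hy : mdeg A y = 2) : ¬ IsMissing A x y := fun h => by
  rcases hP x y h with h | h <;> omega

end MissingPaths2

section DoubleCycle

variable {A : V → V → Prop} {k : ℕ} {a b c : ZMod k → V} {i j t : ZMod k} {e f : Bool}
  {x y u : V}

def part (a b c : ZMod k → V) (i : ZMod k) : Bool → Set V
  | false => {a i, c i}
  | true => {b i}

@[simp]
theorem mem_part_false : x ∈ part a b c i false ↔ x = a i ∨ x = c i := Iff.rfl

@[simp]
theorem mem_part_true : x ∈ part a b c i true ↔ x = b i := Iff.rfl

theorem part_nonempty (a b c : ZMod k → V) (i : ZMod k) (e : Bool) :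
    (part a b c i e).Nonempty := by
  cases e
  exacts [⟨a i, Or.inl rfl⟩, ⟨b i, rfl⟩]

theorem part_subset : part a b c i e ⊆ {a i, b i, c i} := by
  cases e <;> intro x hx <;> simp at hx ⊢ <;> tauto

theorem mem_Kset_iff : u ∈ Kset a b c ↔ ∃ i e, u ∈ part a b c i e := by
  refine exists_congr fun i => ⟨fun h => ?_, fun ⟨e, he⟩ => ?_⟩
  · rcases h with h | h | h
    exacts [⟨false, Or.inl h⟩, ⟨true, h⟩, ⟨false, Or.inr h⟩]
  · cases e <;> simp at he <;> tauto

theorem part_subset_Kset : part a b c i e ⊆ Kset a b c :=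
  fun _ hx => mem_Kset_iff.mpr ⟨i, e, hx⟩

theorem eq_of_mem_part_false (hx : x ∈ part a b c i false) (hy : y ∈ part a b c i false)
    (hu : u ∈ part a b c i false) (hxy : x ≠ y) (hxu : x ≠ u) : y = u := by
  simp only [mem_part_false] at hx hy hu
  rcases hx with rfl | rfl <;> rcases hy with rfl | rfl <;> rcases hu with rfl | rfl <;>
    first | rfl | exact absurd rfl hxy | exact absurd rfl hxu

namespace IsDoubleCycle

variable (hC : IsDoubleCycle A k a b c)
include hC

theorem fact_one_lt : Fact (1 < k) := ⟨hC.1⟩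

theorem ne_add_one (t : ZMod k) : t ≠ t + 1 := by
  have := hC.fact_one_lt
  simp

theorem ne_of_mem_part (hij : i ≠ j) (hx : x ∈ part a b c i e) (hy : y ∈ part a b c j f) :
    x ≠ y := by
  rintro rfl
  exact Set.disjoint_left.mp (hC.2.2.1 i j hij) (part_subset hx) (part_subset hy)

theorem ne_of_mem_part_of_ne (hef : e ≠ f) (hx : x ∈ part a b c i e)
    (hy : y ∈ part a b c i f) : x ≠ y := by
  obtain ⟨⟨hab, -⟩, ⟨hbc, -⟩, -⟩ := hC.2.1 i
  cases e <;> cases f <;> simp only [mem_part_false, mem_part_true] at hx hy <;>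
    first | exact absurd rfl hef | (rcases hx with rfl | rfl <;> rcases hy with rfl | rfl <;>
      first | exact hab | exact hbc.symm | exact hab.symm | exact hbc)

theorem part_eq_of_adj (hxy : A x y) (hx : x ∈ part a b c i e) (hy : y ∈ part a b c i f) :
    e = f := by
  obtain ⟨⟨-, hab, hba⟩, ⟨-, hbc, hcb⟩, -⟩ := hC.2.1 i
  cases e <;> cases f <;> simp only [mem_part_false, mem_part_true] at hx hy <;>
    first | rfl | (rcases hx with rfl | rfl <;> rcases hy with rfl | rfl <;> contradiction)

theorem eq_center_of_isMissing (hP : MissingPaths2 A) (hx : x ∈ part a b c i false)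
    (hxy : IsMissing A x y) : y = b i := by
  obtain ⟨hab, hbc, hac⟩ := hC.2.1 i
  rcases hx with rfl | rfl
  · exact hP.eq_of_isMissing hab hbc hac hxy
  · exact hP.eq_of_isMissing hbc.symm hab.symm hac.symm hxy

theorem adj_or_adj (hP : MissingPaths2 A) (hij : i ≠ j) (hx : x ∈ part a b c i e)
    (hy : y ∈ part a b c j f) : A x y ∨ A y x := by
  by_contra! h
  have hxy : IsMissing A x y := ⟨hC.ne_of_mem_part hij hx hy, h.1, h.2⟩
  cases e
  · exact hC.ne_of_mem_part (e := true) hij rfl hy (hC.eq_center_of_isMissing hP hx hxy).symm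
  cases f
  · exact hC.ne_of_mem_part (f := true) hij hx rfl (hC.eq_center_of_isMissing hP hy hxy.symm)
  obtain ⟨hab, hbc, hac⟩ := hC.2.1 i
  obtain ⟨hab', hbc', hac'⟩ := hC.2.1 j
  rw [mem_part_true] at hx hy
  subst hx hy
  exact hP.not_isMissing_of_mdeg_eq_two (hP.mdeg_eq_two hab hbc hac)
    (hP.mdeg_eq_two hab' hbc' hac') hxy

theorem adj_iff_not_adj (hA : Oriented A) (hP : MissingPaths2 A) (hij : i ≠ j)
    (hx : x ∈ part a b c i e) (hy : y ∈ part a b c j f) : A x y ↔ ¬ A y x :=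
  ⟨hA x y, (hC.adj_or_adj hP hij hx hy).resolve_right⟩

end IsDoubleCycle

end DoubleCycle

section Pattern

variable {A : V → V → Prop} {k : ℕ} {a b c : ZMod k → V}

def StepPattern (A : V → V → Prop) (a b c : ZMod k → V) (t : ZMod k) (e : Bool) : Prop :=
  ∀ g x x', x ∈ part a b c t g → x' ∈ part a b c (t + 1) (xor g e) →
    ¬ A x x' ∧ ¬ SecondOut A x x'

theorem IsDoubleCycle.exists_stepPattern (hC : IsDoubleCycle A k a b c) (t : ZMod k) :
    ∃ e, StepPattern A a b c t e := by
  obtain ⟨L1, L2, L3, L4⟩ := hC.2.2.2 t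
  simp only [Loses, LosesOrd] at L1 L2 L3 L4
  -- the arc between `aₜ` and `aₜ₊₁` fixes the labelling in each of the four losing relations
  have key : ∀ e : Bool, (e = true ↔ A (a t) (a (t + 1))) → StepPattern A a b c t e := by
    rintro (_ | _) he (_ | _) x x' hx hx' <;>
      simp only [Bool.xor_false, Bool.xor_true, Bool.not_false, Bool.not_true, mem_part_false,
        mem_part_true] at he hx hx' <;>
      rcases hx with rfl | rfl <;> rcases hx' with rfl | rfl <;> tauto
  by_cases h : A (a t) (a (t + 1))
  exacts [⟨true, key true (iff_of_true rfl h)⟩, ⟨false, key false (iff_of_false (by simp) h)⟩]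

end Pattern

section Twist

variable {k : ℕ}

theorem self_ne_add_natCast {n : ℕ} (hn : 0 < n) (hnk : n < k) (t : ZMod k) : t ≠ t + n := by
  simpa [ZMod.natCast_eq_zero_iff] using Nat.not_dvd_of_pos_of_lt hn hnk

def parityRun (p : ZMod k → Bool) : ZMod k → ℕ → Bool
  | _, 0 => false
  | t, n + 1 => xor (p t) (parityRun p (t + 1) n)

theorem parityRun_add (p : ZMod k → Bool) (m n : ℕ) (t : ZMod k) :
    parityRun p t (m + n) = xor (parityRun p t m) (parityRun p (t + m) n) := by
  induction m generalizing t with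
  | zero => simp [parityRun]
  | succ m ih =>
    rw [Nat.add_right_comm, parityRun, ih, parityRun, Bool.xor_assoc, Nat.cast_succ, add_assoc,
      add_comm 1 (m : ZMod k)]

def twist (p : ZMod k → Bool) (i j : ZMod k) : Bool :=
  parityRun p i (j - i).val

theorem twist_eq_xor [Fact (1 < k)] (p : ZMod k → Bool) {j t : ZMod k} (hjt : j ≠ t) :
    twist p t j = xor (p t) (twist p (t + 1) j) := by
  have hval : (j - t).val = (j - (t + 1)).val + 1 := by
    have hpos := ZMod.val_pos.mpr (sub_ne_zero.mpr hjt)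
    rw [← sub_sub, ZMod.val_sub (a := j - t) (b := 1) (by rwa [ZMod.val_one]), ZMod.val_one]
    omega
  rw [twist, hval, parityRun, twist]

theorem twist_add_one [Fact (1 < k)] (p : ZMod k → Bool) (t : ZMod k) :
    twist p t (t + 1) = p t := by
  rw [twist_eq_xor p (by simp : t + 1 ≠ t), twist, sub_self, ZMod.val_zero, parityRun,
    Bool.xor_false]

end Twist

section Orientation

variable {A : V → V → Prop} {k : ℕ} {a b c : ZMod k → V} {p : ZMod k → Bool}
  {i j t : ZMod k} {e f : Bool} {x y : V}
variable (hP : MissingPaths2 A) (hC : IsDoubleCycle A k a b c)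
  (hp : ∀ t, StepPattern A a b c t (p t))
include hP hC hp

theorem adj_of_parityRun_eq {n : ℕ} (hn : 0 < n) (hnk : n < k) (hx : x ∈ part a b c t e)
    (hy : y ∈ part a b c (t + n) f) (hef : xor e f = parityRun p t n) : A y x := by
  induction n, hn using Nat.le_induction generalizing t e f x y with
  | base =>
    obtain rfl : f = xor e (p t) := by
      rw [parityRun, parityRun, Bool.xor_false] at hef
      rw [← hef, ← Bool.xor_assoc, Bool.xor_self, Bool.false_xor]
    rw [Nat.cast_one] at hy
    exact (hC.adj_or_adj hP (hC.ne_add_one t) hx hy).resolve_left (hp t e x y hx hy).1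
  | succ n hn ih =>
    obtain ⟨x', hx'⟩ := part_nonempty a b c (t + 1) (xor e (p t))
    have hyx' : A y x' := by
      refine ih (by omega) hx' (by rwa [Nat.cast_succ, ← add_assoc, add_right_comm] at hy) ?_
      rw [parityRun] at hef
      rw [Bool.xor_right_comm, hef, Bool.xor_right_comm, Bool.xor_self, Bool.false_xor]
    obtain ⟨hxx', hso⟩ := hp t e x x' hx hx'
    exact adj_of_not_secondOut (hC.ne_of_mem_part (hC.ne_add_one t).symm hx' hx) hxx' hso hyx'
      (hC.adj_or_adj hP (self_ne_add_natCast n.succ_pos hnk t) hx hy)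

theorem parityRun_cycle (hA : Oriented A) (t : ZMod k) : parityRun p t k = true := by
  obtain ⟨m, hk⟩ : ∃ m, k = m + 1 := ⟨k - 1, by have := hC.1; omega⟩
  obtain ⟨x', hx'⟩ := part_nonempty a b c (t + 1) (p t)
  have ha : a t ∈ part a b c t false := by simp
  have hback : A x' (a t) :=
    adj_of_parityRun_eq hP hC hp one_pos hC.1 ha (by simpa using hx') (by simp [parityRun])
  rw [congrArg (parityRun p t) hk, parityRun]
  by_contra h
  -- going once around the cycle would reverse the arcs prescribed by the pattern at `t`
  have hfwd : A (a t) x' := by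
    refine adj_of_parityRun_eq hP hC hp (n := m) (f := false) (by have := hC.1; omega)
      (by omega) hx' ?_ ?_
    · have hm : (m : ZMod k) + 1 = 0 := by rw [← Nat.cast_add_one, ← hk, ZMod.natCast_self]
      rwa [add_assoc, add_comm 1, hm, add_zero]
    · cases hpt : p t <;> simp_all
  exact hA _ _ hfwd hback

theorem adj_of_twist_eq (hij : i ≠ j) (hx : x ∈ part a b c i e) (hy : y ∈ part a b c j f)
    (hef : xor e f = twist p i j) : A y x := by
  have := hC.fact_one_lt
  refine adj_of_parityRun_eq hP hC hp (ZMod.val_pos.mpr (sub_ne_zero.mpr hij.symm))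
    (ZMod.val_lt _) hx ?_ hef
  rwa [ZMod.natCast_zmod_val, add_sub_cancel]

theorem twist_swap (hA : Oriented A) (hij : i ≠ j) : twist p j i = !twist p i j := by
  have := hC.fact_one_lt
  have hsum : (j - i).val + (i - j).val = k := by
    rw [← neg_sub j i, ZMod.neg_val, if_neg (sub_ne_zero.mpr hij.symm)]
    have := ZMod.val_lt (j - i)
    omega
  have h := parityRun_add p (j - i).val (i - j).val i
  rw [hsum, parityRun_cycle hP hC hp hA, ZMod.natCast_zmod_val, add_sub_cancel] at h
  unfold twist
  revert h
  cases parityRun p i (j - i).val <;> cases parityRun p j (i - j).val <;> simp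

theorem adj_iff_twist (hA : Oriented A) (hij : i ≠ j) (hx : x ∈ part a b c i e)
    (hy : y ∈ part a b c j f) :
    A y x ↔ xor e f = twist p i j := by
  refine ⟨fun hyx => ?_, adj_of_twist_eq hP hC hp hij hx hy⟩
  by_contra hef
  refine hA _ _ hyx (adj_of_twist_eq hP hC hp hij.symm hy hx ?_)
  rw [twist_swap hP hC hp hA hij]
  cases e <;> cases f <;> simp_all

end Orientation

section SecondOut

variable {A : V → V → Prop} {k : ℕ} {a b c : ZMod k → V} {p : ZMod k → Bool}
  {j t : ZMod k} {e f : Bool} {x u w : V}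
variable (hA : Oriented A) (hP : MissingPaths2 A) (hC : IsDoubleCycle A k a b c)
  (hp : ∀ t, StepPattern A a b c t (p t))
include hA hP hC hp

theorem notMem_secondOutIn_of_mem_part_self (hx : x ∈ part a b c t e)
    (hu : u ∈ part a b c t e) : u ∉ secondOutIn A (Kset a b c) x := by
  rintro ⟨-, hux, -, w, hwK, hxw, hwu⟩
  obtain ⟨j, g, hw⟩ := mem_Kset_iff.mp hwK
  by_cases hjt : j = t
  · subst hjt
    obtain rfl := hC.part_eq_of_adj hxw hx hw
    cases e
    · obtain rfl := eq_of_mem_part_false hx hw hu (hA.ne_of_adj hxw) hux.symm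
      exact hA.irrefl hwu
    · rw [mem_part_true] at hx hw
      exact hA.irrefl (hx ▸ hw ▸ hxw)
  · have hwx := (adj_iff_twist hP hC hp hA (Ne.symm hjt) hx hw).not.mp (hA _ _ hxw)
    exact hwx ((adj_iff_twist hP hC hp hA (Ne.symm hjt) hu hw).mp hwu)

theorem adj_of_mem_part_add_one (hx : x ∈ part a b c t e)
    (hw : w ∈ part a b c (t + 1) (xor e (!p t))) : A x w := by
  have := hC.fact_one_lt
  have htt := hC.ne_add_one t
  rw [hC.adj_iff_not_adj hA hP htt hx hw, adj_iff_twist hP hC hp hA htt hx hw, twist_add_one]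
  cases e <;> cases p t <;> decide

theorem mem_secondOutIn_of_mem_part_not (hx : x ∈ part a b c t e) (hu : u ∈ part a b c t (!e)) :
    u ∈ secondOutIn A (Kset a b c) x := by
  have := hC.fact_one_lt
  have htt := hC.ne_add_one t
  obtain ⟨w, hw⟩ := part_nonempty a b c (t + 1) (xor e (!p t))
  refine ⟨part_subset_Kset hu, (hC.ne_of_mem_part_of_ne (by simp) hx hu).symm,
    fun hxu => Bool.not_ne_self e (hC.part_eq_of_adj hxu hx hu).symm, w, part_subset_Kset hw,
    adj_of_mem_part_add_one hA hP hC hp hx hw, ?_⟩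
  rw [adj_iff_twist hP hC hp hA htt hu hw, twist_add_one]
  cases e <;> cases p t <;> decide

theorem notMem_secondOutIn_of_mem_part_add_one (hx : x ∈ part a b c t e)
    (hu : u ∈ part a b c (t + 1) f) : u ∉ secondOutIn A (Kset a b c) x := by
  have := hC.fact_one_lt
  have htt := hC.ne_add_one t
  rintro ⟨-, -, hxu, w, hwK, hxw, hwu⟩
  have hux : xor e f = p t := by
    rw [← twist_add_one p t, ← adj_iff_twist hP hC hp hA htt hx hu]
    exact (hC.adj_or_adj hP htt hx hu).resolve_left hxu
  obtain ⟨j, g, hw⟩ := mem_Kset_iff.mp hwK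
  by_cases hjt : j = t
  · subst hjt
    obtain rfl := hC.part_eq_of_adj hxw hx hw
    rw [hC.adj_iff_not_adj hA hP htt hw hu, adj_iff_twist hP hC hp hA htt hw hu,
      twist_add_one] at hwu
    exact hwu hux
  by_cases hjt1 : j = t + 1
  · subst hjt1
    obtain rfl := hC.part_eq_of_adj hwu hw hu
    rw [hC.adj_iff_not_adj hA hP htt hx hw, adj_iff_twist hP hC hp hA htt hx hw,
      twist_add_one] at hxw
    exact hxw hux
  · rw [adj_iff_twist hP hC hp hA (Ne.symm hjt1) hu hw] at hwu
    rw [hC.adj_iff_not_adj hA hP (Ne.symm hjt) hx hw, adj_iff_twist hP hC hp hA (Ne.symm hjt) hx hw,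
      twist_eq_xor p hjt, ← hux, ← hwu] at hxw
    exact hxw (by cases e <;> cases f <;> cases g <;> rfl)

theorem mem_secondOutIn_iff_of_ne (hx : x ∈ part a b c t e) (hu : u ∈ part a b c j f)
    (hjt : j ≠ t) (hjt1 : j ≠ t + 1) : u ∈ secondOutIn A (Kset a b c) x ↔ A u x := by
  have := hC.fact_one_lt
  refine ⟨fun ⟨_, _, hxu, _⟩ => (hC.adj_or_adj hP (Ne.symm hjt) hx hu).resolve_left hxu,
    fun hux => ?_⟩
  obtain ⟨w, hw⟩ := part_nonempty a b c (t + 1) (xor e (!p t))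
  refine ⟨part_subset_Kset hu, hA.ne_of_adj hux, hA _ _ hux, w, part_subset_Kset hw,
    adj_of_mem_part_add_one hA hP hC hp hx hw, ?_⟩
  rw [hC.adj_iff_not_adj hA hP (Ne.symm hjt1) hw hu, adj_iff_twist hP hC hp hA (Ne.symm hjt1) hw hu]
  rw [adj_iff_twist hP hC hp hA (Ne.symm hjt) hx hu, twist_eq_xor p hjt] at hux
  revert hux
  cases e <;> cases f <;> cases p t <;> cases twist p (t + 1) j <;> decide

theorem mem_secondOutIn_iff (hx : x ∈ part a b c t e) :
    u ∈ secondOutIn A (Kset a b c) x ↔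
      u ∈ Kset a b c ∧ (A u x ∨ u ∈ part a b c t (!e)) ∧ u ∉ part a b c t e ∧
        ∀ f, u ∉ part a b c (t + 1) f := by
  have htt := hC.ne_add_one t
  have hsplit : ∀ f, f = e ∨ f = !e := fun f => by cases e <;> cases f <;> simp
  constructor
  · intro h
    obtain ⟨j, f, hu⟩ := mem_Kset_iff.mp h.1
    by_cases hjt : j = t
    · subst hjt
      obtain rfl | rfl := hsplit f
      · exact absurd h (notMem_secondOutIn_of_mem_part_self hA hP hC hp hx hu)
      · exact ⟨h.1, Or.inr hu, fun hu' => hC.ne_of_mem_part_of_ne (by simp) hu' hu rfl,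
          fun f hu' => hC.ne_of_mem_part htt hu hu' rfl⟩
    by_cases hjt1 : j = t + 1
    · subst hjt1
      exact absurd h (notMem_secondOutIn_of_mem_part_add_one hA hP hC hp hx hu)
    · exact ⟨h.1, Or.inl ((mem_secondOutIn_iff_of_ne hA hP hC hp hx hu hjt hjt1).mp h),
        fun hu' => hC.ne_of_mem_part hjt hu hu' rfl,
        fun f hu' => hC.ne_of_mem_part hjt1 hu hu' rfl⟩
  · rintro ⟨huK, hux | hu, hne, hnext⟩
    · obtain ⟨j, f, hu⟩ := mem_Kset_iff.mp huK
      by_cases hjt : j = t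
      · subst hjt
        obtain rfl | rfl := hsplit f
        · exact absurd hu hne
        · exact mem_secondOutIn_of_mem_part_not hA hP hC hp hx hu
      by_cases hjt1 : j = t + 1
      · subst hjt1
        exact absurd hu (hnext f)
      · exact (mem_secondOutIn_iff_of_ne hA hP hC hp hx hu hjt hjt1).mpr hux
    · exact mem_secondOutIn_of_mem_part_not hA hP hC hp hx hu

end SecondOut

theorem stmt10_general {V : Type*} (A : V → V → Prop) (hA : Oriented A)
    (hP : MissingPaths2 A) (k : ℕ) (a b c : ZMod k → V)
    (hC : IsDoubleCycle A k a b c) (K : Set V) (hK : K = Kset a b c) :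
    ∀ t,
      secondOutIn A K (a t) =
        (inIn A K (a t) ∪ {b t}) \ {a (t + 1), b (t + 1), c (t + 1), c t} ∧
      secondOutIn A K (c t) =
        (inIn A K (c t) ∪ {b t}) \ {a (t + 1), b (t + 1), c (t + 1), a t} ∧
      secondOutIn A K (b t) =
        (inIn A K (b t) ∪ {a t, c t}) \ {a (t + 1), b (t + 1), c (t + 1)} := by
  subst hK
  choose p hp using hC.exists_stepPattern
  intro t
  have hmem : a t ∈ Kset a b c ∧ b t ∈ Kset a b c ∧ c t ∈ Kset a b c :=
    ⟨⟨t, .inl rfl⟩, ⟨t, .inr (.inl rfl)⟩, ⟨t, .inr (.inr rfl)⟩⟩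
  obtain ⟨⟨hab, -⟩, ⟨hbc, -⟩, -⟩ := hC.2.1 t
  have hirr : ∀ v, ¬ A v v := fun v => hA.irrefl
  have key := fun {x} e (hx : x ∈ part a b c t e) u => mem_secondOutIn_iff hA hP hC hp (u := u) hx
  refine ⟨Set.ext fun u => (key false (.inl rfl) u).trans ?_,
    Set.ext fun u => (key false (.inr rfl) u).trans ?_, Set.ext fun u => (key true rfl u).trans ?_⟩
  all_goals simp only [inIn, Bool.forall_bool]; aesop

/-- Lemma 4.11: description of the second out-neighborhoods in `D[K(C)]`. -/
theorem stmt10 {V : Type*} [Fintype V] (A : V → V → Prop) (hA : Oriented A)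
    (hP : MissingPaths2 A) (k : ℕ) (a b c : ZMod k → V)
    (hC : IsDoubleCycle A k a b c) (K : Set V) (hK : K = Kset a b c) :
    ∀ t,
      secondOutIn A K (a t) =
        (inIn A K (a t) ∪ {b t}) \ {a (t + 1), b (t + 1), c (t + 1), c t} ∧
      secondOutIn A K (c t) =
        (inIn A K (c t) ∪ {b t}) \ {a (t + 1), b (t + 1), c (t + 1), a t} ∧
      secondOutIn A K (b t) =
        (inIn A K (b t) ∪ {a t, c t}) \ {a (t + 1), b (t + 1), c (t + 1)} :=
  stmt10_general A hA hP k a b c hC K hK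

end SSNC
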